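/- Suppose that in Algorithm niAPG every proximal step is exact (x_{k+1} is a global minimizer of w ↦ (1/2)·‖w − z_k‖² + η·g(w) for all k ≥ 1) and that F is bounded below. Let c₁ = max_{t = 1,…,q+1} F(x_t) − inf F. Then: (i) lim_{k→∞} min_{t ∈ W(k)} ‖x_{t+1} − v_t‖² = 0; and (ii) for every K ≥ 1, min_{k = 1,…,K} min_{t ∈ W(k)} ‖x_{t+1} − v_t‖² ≤ 2·(q+1)·c₁ / ((ρ − L)·K). -/

import Mathlib

/-!
An exact proximal gradient step with `η < 1/L` decreases `F` sufficiently: the descent lemma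
together with the prox optimality tested at `v_k` gives
`F(x_{k+1}) + (ρ - L)/2 ‖x_{k+1} - v_k‖² ≤ F(v_k) ≤ Δ_k`, the last step being the acceptance
test of niAPG. So the window maxima `Δ_k` are nonincreasing and bounded below, and
`Δ_{j+2} ≤ Δ_{j+1-q} - (ρ - L)/2 · m_j` forces `m_j → 0`. For the rate, if
`‖x_{t+1} - v_t‖² ≥ μ` for all `t ≤ K`, then the potential `F(x_t) + α t` with
`α = (ρ - L) μ / (2 (q + 1))` never exceeds its value at `t = 1`, because each window reaches
back at most `q` steps; at `t = K + 1` this reads `α K ≤ F(x_1) - inf F ≤ c₁`.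
-/

open Filter
open scoped RealInnerProductSpace Topology

section ProxGradient

variable {E : Type*} [NormedAddCommGroup E] [InnerProductSpace ℝ E] [CompleteSpace E]

theorem le_quadratic_model_of_lipschitz_gradient {f : E → ℝ} {f' : E → E} {L : ℝ}
    (hf : ∀ x, HasGradientAt f (f' x) x) (hlip : ∀ x y, ‖f' x - f' y‖ ≤ L * ‖x - y‖) (a b : E) :
    f b ≤ f a + ⟪f' a, b - a⟫ + L / 2 * ‖b - a‖ ^ 2 := by
  set φ : ℝ → ℝ := fun t ↦ f (a + t • (b - a)) - t * ⟪f' a, b - a⟫ - t ^ 2 * (L / 2) * ‖b - a‖ ^ 2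
  have hφ' : ∀ t, HasDerivAt φ
      (⟪f' (a + t • (b - a)) - f' a, b - a⟫ - t * L * ‖b - a‖ ^ 2) t := by
    intro t
    have hline : HasDerivAt (fun s : ℝ ↦ a + s • (b - a)) (b - a) t := by
      simpa using ((hasDerivAt_id t).smul_const (b - a)).const_add a
    have hf_line := (hf _).hasFDerivAt.comp_hasDerivAt t hline
    refine ((hf_line.sub ((hasDerivAt_id t).mul_const ⟪f' a, b - a⟫)).sub
      (((hasDerivAt_pow 2 t).mul_const (L / 2)).mul_const (‖b - a‖ ^ 2))).congr_deriv ?_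
    rw [InnerProductSpace.toDual_apply_apply, inner_sub_left]
    ring
  have hφ'_nonpos : ∀ t ∈ interior (Set.Icc (0 : ℝ) 1), deriv φ t ≤ 0 := by
    intro t ht
    rw [interior_Icc] at ht
    rw [(hφ' t).deriv, sub_nonpos]
    calc ⟪f' (a + t • (b - a)) - f' a, b - a⟫
        ≤ ‖f' (a + t • (b - a)) - f' a‖ * ‖b - a‖ := real_inner_le_norm _ _
      _ ≤ L * ‖a + t • (b - a) - a‖ * ‖b - a‖ := by gcongr; exact hlip _ _
      _ = t * L * ‖b - a‖ ^ 2 := by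
        rw [add_sub_cancel_left, norm_smul, Real.norm_of_nonneg ht.1.le]; ring
  have hφ_anti : AntitoneOn φ (Set.Icc 0 1) :=
    antitoneOn_of_deriv_nonpos (convex_Icc 0 1)
      (continuous_iff_continuousAt.2 fun t ↦ (hφ' t).continuousAt).continuousOn
      (fun t _ ↦ (hφ' t).differentiableAt.differentiableWithinAt) hφ'_nonpos
  have := hφ_anti (by simp) (by simp) zero_le_one
  simp only [φ, one_smul, zero_smul, add_zero, add_sub_cancel] at this
  linarith

theorem prox_grad_step_sufficient_decrease {f g : E → ℝ} {f' : E → E} {L η : ℝ}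
    (hf : ∀ x, HasGradientAt f (f' x) x) (hlip : ∀ x y, ‖f' x - f' y‖ ≤ L * ‖x - y‖)
    (hη : 0 < η) {v w : E}
    (hw : 1 / 2 * ‖w - (v - η • f' v)‖ ^ 2 + η * g w ≤
      1 / 2 * ‖v - (v - η • f' v)‖ ^ 2 + η * g v) :
    f w + g w + (1 / η - L) / 2 * ‖w - v‖ ^ 2 ≤ f v + g v := by
  have hw_expand : w - (v - η • f' v) = (w - v) + η • f' v := by abel
  rw [hw_expand, sub_sub_cancel, norm_add_sq_real, real_inner_smul_right] at hw
  have hprox : η * (⟪w - v, f' v⟫ + g w + 1 / η / 2 * ‖w - v‖ ^ 2) ≤ η * g v := by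
    field_simp
    linarith
  have hdescent := le_quadratic_model_of_lipschitz_gradient hf hlip v w
  rw [real_inner_comm] at hdescent
  linarith [le_of_mul_le_mul_left hprox hη]

end ProxGradient

theorem Finset.isGreatest_image_sup' {α β : Type*} [LinearOrder β] {s : Finset α}
    (hs : s.Nonempty) (f : α → β) : IsGreatest (f '' ↑s) (s.sup' hs f) := by
  obtain ⟨t, ht, heq⟩ := s.exists_mem_eq_sup' hs f
  exact ⟨heq ▸ Set.mem_image_of_mem f ht, Set.forall_mem_image.2 fun _ hu ↦ s.le_sup' f hu⟩

def IsWindowMax (q : ℕ) (a Δ : ℕ → ℝ) : Prop :=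
  ∀ k, 1 ≤ k → IsGreatest (a '' Set.Icc (max 1 (k - q)) k) (Δ k)

namespace IsWindowMax

variable {q : ℕ} {a Δ : ℕ → ℝ}

theorem le (h : IsWindowMax q a Δ) {k t : ℕ} (ht : t ∈ Set.Icc (max 1 (k - q)) k) :
    a t ≤ Δ k :=
  (h k (by simp at ht; omega)).2 (Set.mem_image_of_mem a ht)

theorem le_of_forall_le (h : IsWindowMax q a Δ) {k : ℕ} (hk : 1 ≤ k) {B : ℝ}
    (hB : ∀ t ∈ Set.Icc (max 1 (k - q)) k, a t ≤ B) : Δ k ≤ B := by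
  obtain ⟨t, ht, heq⟩ := (h k hk).1
  exact heq ▸ hB t ht

theorem antitone_succ (h : IsWindowMax q a Δ) (hdesc : ∀ k, 1 ≤ k → a (k + 1) ≤ Δ k) :
    Antitone fun n ↦ Δ (n + 1) := by
  refine antitone_nat_of_succ_le fun n ↦ h.le_of_forall_le (by omega) fun t ht ↦ ?_
  rw [Set.mem_Icc] at ht
  rcases Nat.lt_or_ge t (n + 2) with hlt | hge
  · exact h.le ⟨by omega, by omega⟩
  · obtain rfl : t = n + 2 := by omega
    exact hdesc (n + 1) (by omega)

theorem add_mul_le_add (h : IsWindowMax q a Δ) {α : ℝ} (hα : 0 ≤ α) {K : ℕ}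
    (hdesc : ∀ k, 1 ≤ k → k ≤ K → a (k + 1) + α * (q + 1) ≤ Δ k) :
    ∀ t, 1 ≤ t → t ≤ K + 1 → a t + α * t ≤ a 1 + α := by
  induction K with
  | zero =>
    intro t ht₁ ht₂
    obtain rfl : t = 1 := by omega
    simp
  | succ K ih =>
    have ih := ih fun k hk₁ hk₂ ↦ hdesc k hk₁ (by omega)
    intro t ht₁ ht₂
    rcases Nat.lt_or_ge t (K + 2) with hlt | hge
    · exact ih t ht₁ (by omega)
    obtain rfl : t = K + 2 := by omega
    have hΔ : Δ (K + 1) ≤ a 1 + α - α * ((K : ℝ) + 1 - q) := by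
      refine h.le_of_forall_le (by omega) fun s hs ↦ ?_
      rw [Set.mem_Icc] at hs
      have hs_low : (K : ℝ) + 1 - q ≤ s := by
        rw [sub_le_iff_le_add]; exact_mod_cast (by omega : K + 1 ≤ s + q)
      have := ih s (by omega) hs.2
      nlinarith
    have := hdesc (K + 1) (by omega) le_rfl
    push_cast
    linarith

theorem mul_le_mul_sub (h : IsWindowMax q a Δ) {β : ℝ} (hβ : 0 ≤ β) {K : ℕ}
    (hdesc : ∀ k, 1 ≤ k → k ≤ K → a (k + 1) + β ≤ Δ k) :
    β * K ≤ (q + 1) * (a 1 - a (K + 1)) := by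
  have hq : (0 : ℝ) < q + 1 := by positivity
  have hα : β / (q + 1) * (q + 1) = β := div_mul_cancel₀ β hq.ne'
  have := h.add_mul_le_add (div_nonneg hβ hq.le) (by rwa [hα]) (K + 1) (by omega) le_rfl
  push_cast at this
  rw [← hα]
  nlinarith

theorem tendsto_zero_of_le_window (h : IsWindowMax q a Δ) {c : ℝ} (hc : 0 < c)
    {d : ℕ → ℝ} (hd : ∀ k, 0 ≤ d k) (hdesc : ∀ k, 1 ≤ k → a (k + 1) + c * d k ≤ Δ k)
    (ha : BddBelow (Set.range a)) {m : ℕ → ℝ} (hm₀ : ∀ j, 0 ≤ m j)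
    (hm : ∀ j, ∀ t ∈ Set.Icc (max 1 (j + 1 - q)) (j + 1), m j ≤ d t) :
    Tendsto m atTop (𝓝 0) := by
  have hanti := h.antitone_succ fun k hk ↦ by nlinarith [hdesc k hk, hd k]
  obtain ⟨B, hB⟩ := ha
  have hbdd : BddBelow (Set.range fun n ↦ Δ (n + 1)) :=
    ⟨B, Set.forall_mem_range.2 fun n ↦ (hB ⟨n + 1, rfl⟩).trans (h.le (by simp))⟩
  have hlim := tendsto_atTop_ciInf hanti hbdd
  have hgap : ∀ j, q ≤ j → c * m j ≤ Δ (j + 1 - q) - Δ (j + 2) := by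
    intro j hj
    suffices Δ (j + 2) ≤ Δ (j + 1 - q) - c * m j by linarith
    refine h.le_of_forall_le (by omega) fun s hs ↦ ?_
    rw [Set.mem_Icc] at hs
    obtain ⟨r, rfl⟩ : ∃ r, s = r + 1 := ⟨s - 1, by omega⟩
    have hmr : m j ≤ d r := hm j r ⟨by omega, by omega⟩
    have hΔ : Δ r ≤ Δ (j + 1 - q) := by
      simpa [show r - 1 + 1 = r by omega, show j - q + 1 = j + 1 - q by omega] using
        hanti (show j - q ≤ r - 1 by omega)
    nlinarith [hdesc r (by omega)]
  have hupper : Tendsto (fun j ↦ (Δ (j + 1 - q) - Δ (j + 2)) / c) atTop (𝓝 0) := by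
    have h₁ : Tendsto (fun j ↦ Δ (j + 1 - q)) atTop (𝓝 (⨅ n, Δ (n + 1))) :=
      (hlim.comp (tendsto_sub_atTop_nat q)).congr' <| (eventually_ge_atTop q).mono fun j hj ↦ by
        simp [show j - q + 1 = j + 1 - q by omega]
    simpa using (h₁.sub (hlim.comp (tendsto_add_atTop_nat 1))).div_const c
  refine tendsto_of_tendsto_of_tendsto_of_le_of_le' tendsto_const_nhds hupper
    (Eventually.of_forall hm₀) ?_
  filter_upwards [eventually_ge_atTop q] with j hj
  rw [le_div_iff₀ hc, mul_comm]
  exact hgap j hj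

theorem inf'_range_mul_le (h : IsWindowMax q a Δ) {c : ℝ} (hc : 0 ≤ c) {d : ℕ → ℝ}
    (hdesc : ∀ k, 1 ≤ k → a (k + 1) + c * d k ≤ Δ k) {m : ℕ → ℝ} (hm₀ : ∀ j, 0 ≤ m j)
    (hm : ∀ j, ∀ t ∈ Set.Icc (max 1 (j + 1 - q)) (j + 1), m j ≤ d t) {K : ℕ}
    (hK : (Finset.range K).Nonempty) :
    c * (Finset.range K).inf' hK m * K ≤ (q + 1) * (a 1 - a (K + 1)) := by
  refine h.mul_le_mul_sub (mul_nonneg hc (Finset.le_inf' _ _ fun j _ ↦ hm₀ j))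
    fun k hk₁ hk₂ ↦ ?_
  have hmk : (Finset.range K).inf' hK m ≤ d k :=
    (Finset.inf'_le m (Finset.mem_range.2 (by omega : k - 1 < K))).trans
      (hm _ k ⟨by omega, by omega⟩)
  nlinarith [hdesc k hk₁]

end IsWindowMax

/-- Proposition 4: `O(1/K)` convergence rate for exact niAPG.
With exact proximal steps and `F` bounded below, letting
`c₁ = max_{t = 1,…,q+1} F(x_t) − inf F` and `m j = min_{t ∈ W(j+1)} ‖x_{t+1} − v_t‖²`
(where `W(k) = {max(1, k−q), …, k}`), we have `m j → 0` and, for every `K ≥ 1`,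
`min_{k = 1,…,K} (min_{t ∈ W(k)} ‖x_{t+1} − v_t‖²) ≤ 2(q+1)c₁ / ((ρ−L) K)`. -/
theorem niAPG_exact_rate
    {E : Type*} [NormedAddCommGroup E] [InnerProductSpace ℝ E] [FiniteDimensional ℝ E]
    (f g F : E → ℝ) (f' : E → E) (L η ρ : ℝ)
    (hf : ∀ x, HasGradientAt f (f' x) x)
    (hlip : ∀ x y, ‖f' x - f' y‖ ≤ L * ‖x - y‖)
    (hF : ∀ x, F x = f x + g x)
    (hbdd : BddBelow (Set.range F))
    (hη : 0 < η) (hηL : η < 1 / L) (hρ : ρ = 1 / η)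
    (q : ℕ) (x y v z : ℕ → E) (Δ : ℕ → ℝ)
    (hΔ : ∀ k, ∀ hk : 1 ≤ k, Δ k =
      (Finset.Icc (max 1 (k - q)) k).sup' (Finset.nonempty_Icc.mpr (by omega))
        (fun t => F (x t)))
    (hv : ∀ k, 1 ≤ k → v k = if F (y k) ≤ Δ k then y k else x k)
    (hz : ∀ k, 1 ≤ k → z k = v k - η • f' (v k))
    (hprox : ∀ k, 1 ≤ k → ∀ w : E,
      (1 / 2) * ‖x (k + 1) - z k‖ ^ 2 + η * g (x (k + 1)) ≤
        (1 / 2) * ‖w - z k‖ ^ 2 + η * g w)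
    (c₁ : ℝ)
    (hc₁ : c₁ = (Finset.Icc 1 (q + 1)).sup' (Finset.nonempty_Icc.mpr (by omega))
      (fun t => F (x t)) - sInf (Set.range F))
    -- `m j` is `min_{t ∈ W(j+1)} ‖x_{t+1} − v_t‖²`
    (m : ℕ → ℝ)
    (hm : ∀ j : ℕ, m j = (Finset.Icc (max 1 (j + 1 - q)) (j + 1)).inf'
      (Finset.nonempty_Icc.mpr (by omega)) (fun t => ‖x (t + 1) - v t‖ ^ 2)) :
    Tendsto m atTop (nhds 0) ∧
    ∀ K : ℕ, ∀ hK : 1 ≤ K,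
      (Finset.range K).inf' (Finset.nonempty_range_iff.mpr (by omega)) m ≤
        2 * ((q : ℝ) + 1) * c₁ / ((ρ - L) * (K : ℝ)) := by
  have hρL : L < ρ := by
    rw [hρ, ← one_div_one_div L]
    exact one_div_lt_one_div_of_lt hη hηL
  have hwin : IsWindowMax q (fun t ↦ F (x t)) Δ := fun k hk ↦ by
    rw [hΔ k hk, ← Finset.coe_Icc]
    exact Finset.isGreatest_image_sup' _ _
  have hdesc : ∀ k, 1 ≤ k → F (x (k + 1)) + (ρ - L) / 2 * ‖x (k + 1) - v k‖ ^ 2 ≤ Δ k := by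
    intro k hk
    have hv_le : F (v k) ≤ Δ k := by
      rw [hv k hk]
      split_ifs with hy
      exacts [hy, hwin.le ⟨by omega, le_rfl⟩]
    have := prox_grad_step_sufficient_decrease hf hlip hη
      (by simpa [hz k hk] using hprox k hk (v k))
    rw [← hF, ← hF, ← hρ] at this
    linarith
  have hm_le : ∀ j, ∀ t ∈ Set.Icc (max 1 (j + 1 - q)) (j + 1), m j ≤ ‖x (t + 1) - v t‖ ^ 2 :=
    fun j t ht ↦ hm j ▸ Finset.inf'_le _ (Finset.mem_Icc.2 ht)
  have hm₀ : ∀ j, 0 ≤ m j := fun j ↦ hm j ▸ Finset.le_inf' _ _ fun _ _ ↦ sq_nonneg _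
  refine ⟨hwin.tendsto_zero_of_le_window (by linarith) (fun _ ↦ sq_nonneg _) hdesc
    (hbdd.mono (Set.range_comp_subset_range x F)) hm₀ hm_le, fun K hK ↦ ?_⟩
  have hrate := hwin.inf'_range_mul_le (half_pos (sub_pos.2 hρL)).le hdesc hm₀ hm_le
    (K := K) (Finset.nonempty_range_iff.mpr (by omega))
  have hgap : F (x 1) - F (x (K + 1)) ≤ c₁ := by
    have h₁ := Finset.le_sup' (fun t ↦ F (x t)) (Finset.mem_Icc.2 ⟨le_rfl, by omega⟩ :
      1 ∈ Finset.Icc 1 (q + 1))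
    have h₂ := csInf_le hbdd ⟨x (K + 1), rfl⟩
    rw [hc₁]
    linarith
  rw [le_div_iff₀ (by positivity)]
  nlinarith
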